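/- Let q ≥ 1 be an integer, let a < b be real numbers, set τ = b − a, ζ_q = 1/(4(2q + 1)), λ = ζ_q/τ, fix θ ∈ ℝ, and define φ(t) = θ − λ(t − a). Let H be a real inner product space, let w be an H-valued polynomial of degree at most q − 1, and let g be an L²(a, b)-orthogonal projection of the function t ↦ φ(t)·w(t) onto H-valued polynomials of degree at most q − 1. Then (∫_a^b ‖φ(t)w(t) − g(t)‖_H² dt)^{1/2} ≤ ζ_q · (∫_a^b ‖w(t)‖_H² dt)^{1/2}. -/

import Mathlib

open MeasureTheory

/-- An `H`-valued polynomial of degree at most `k`: a function of the form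
`t ↦ ∑_{i=0}^{k} t^i • cᵢ` with coefficients `cᵢ ∈ H`. -/
def IsPolyDeg {H : Type*} [NormedAddCommGroup H] [InnerProductSpace ℝ H]
    (k : ℕ) (v : ℝ → H) : Prop :=
  ∃ c : ℕ → H, ∀ t : ℝ, v t = ∑ i ∈ Finset.range (k + 1), t ^ i • c i

/-- `g` is an `L²(a, b)`-orthogonal projection of `f` onto `H`-valued polynomials of
degree at most `k`. -/
def IsL2ProjOn {H : Type*} [NormedAddCommGroup H] [InnerProductSpace ℝ H]
    (a b : ℝ) (k : ℕ) (f g : ℝ → H) : Prop :=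
  IsPolyDeg k g ∧
    ∀ r : ℝ → H, IsPolyDeg k r →
      ∫ t in Set.Ioo a b, (inner ℝ (f t - g t) (r t) : ℝ) = 0

/-!
The projection `g` is a best approximation: since `f - g` is orthogonal to every
polynomial, Pythagoras gives `‖f - g‖ ≤ ‖f - p‖` in `L²(a, b)` for every polynomial `p` of
degree at most `q - 1`. Take `p = θ • w`; then `f - p = -λ (t - a) • w`, and on `(a, b)` the
weight satisfies `|λ (t - a)| ≤ λ τ = ζ_q`.
-/

section Polynomial

variable {H : Type*} [NormedAddCommGroup H] [InnerProductSpace ℝ H] {k : ℕ} {u v : ℝ → H}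

lemma IsPolyDeg.continuous (hv : IsPolyDeg k v) : Continuous v := by
  obtain ⟨c, hc⟩ := hv
  rw [funext hc]
  fun_prop

lemma IsPolyDeg.const_smul (θ : ℝ) (hv : IsPolyDeg k v) : IsPolyDeg k fun t => θ • v t := by
  obtain ⟨c, hc⟩ := hv
  refine ⟨fun i => θ • c i, fun t => ?_⟩
  simp only [hc t, Finset.smul_sum, smul_comm θ]

lemma IsPolyDeg.sub (hu : IsPolyDeg k u) (hv : IsPolyDeg k v) :
    IsPolyDeg k fun t => u t - v t := by
  obtain ⟨c, hc⟩ := hu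
  obtain ⟨d, hd⟩ := hv
  refine ⟨fun i => c i - d i, fun t => ?_⟩
  simp only [hc t, hd t, smul_sub, Finset.sum_sub_distrib]

end Polynomial

lemma Continuous.integrableOn_Ioo {f : ℝ → ℝ} (hf : Continuous f) (a b : ℝ) :
    IntegrableOn f (Set.Ioo a b) :=
  hf.integrableOn_Icc.mono_set Set.Ioo_subset_Icc_self

section Projection

variable {H : Type*} [NormedAddCommGroup H] [InnerProductSpace ℝ H] {a b : ℝ} {k : ℕ}
  {f g p : ℝ → H}

lemma IsL2ProjOn.integral_norm_sq_sub_eq (hf : Continuous f) (hg : IsL2ProjOn a b k f g)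
    (hp : IsPolyDeg k p) :
    ∫ t in Set.Ioo a b, ‖f t - p t‖ ^ 2 =
      (∫ t in Set.Ioo a b, ‖f t - g t‖ ^ 2) + ∫ t in Set.Ioo a b, ‖p t - g t‖ ^ 2 := by
  have hgc := hg.1.continuous
  have hpc := hp.continuous
  have horth := hg.2 _ (hp.sub hg.1)
  have hpoint : ∀ t, ‖f t - p t‖ ^ 2 = ‖f t - g t‖ ^ 2 + ‖p t - g t‖ ^ 2
      - 2 * (inner ℝ (f t - g t) (p t - g t) : ℝ) := fun t => by
    rw [show f t - p t = (f t - g t) - (p t - g t) by abel, norm_sub_sq_real]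
    ring
  simp_rw [hpoint]
  rw [integral_sub, integral_add, integral_const_mul, horth, mul_zero, sub_zero]
  all_goals exact Continuous.integrableOn_Ioo (by fun_prop) a b

lemma IsL2ProjOn.integral_norm_sq_sub_le (hf : Continuous f) (hg : IsL2ProjOn a b k f g)
    (hp : IsPolyDeg k p) :
    ∫ t in Set.Ioo a b, ‖f t - g t‖ ^ 2 ≤ ∫ t in Set.Ioo a b, ‖f t - p t‖ ^ 2 := by
  rw [hg.integral_norm_sq_sub_eq hf hp, le_add_iff_nonneg_right]
  exact setIntegral_nonneg measurableSet_Ioo fun t _ => sq_nonneg _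

end Projection

lemma integral_norm_sq_le_of_ae_norm_le {α E F : Type*} [MeasurableSpace α] {μ : Measure α}
    [NormedAddCommGroup E] [NormedAddCommGroup F] {u : α → E} {v : α → F} {c : ℝ}
    (hv : Integrable (fun x => ‖v x‖ ^ 2) μ) (h : ∀ᵐ x ∂μ, ‖u x‖ ≤ c * ‖v x‖) :
    ∫ x, ‖u x‖ ^ 2 ∂μ ≤ c ^ 2 * ∫ x, ‖v x‖ ^ 2 ∂μ := by
  rw [← integral_const_mul]
  refine integral_mono_of_nonneg (.of_forall fun x => sq_nonneg _) (hv.const_mul _) ?_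
  filter_upwards [h] with x hx
  simpa only [mul_pow] using pow_le_pow_left₀ (norm_nonneg _) hx 2

lemma abs_div_mul_sub_le_of_mem_Icc {a b t ζ : ℝ} (hζ : 0 ≤ ζ) (ht : t ∈ Set.Icc a b) :
    |ζ / (b - a) * (t - a)| ≤ ζ := by
  have hta : 0 ≤ t - a := sub_nonneg.2 ht.1
  have hba : 0 ≤ b - a := by linarith [ht.2]
  have hratio : (t - a) / (b - a) ≤ 1 := div_le_one_of_le₀ (by linarith [ht.2]) hba
  rw [div_mul_eq_mul_div, mul_div_assoc, abs_of_nonneg (mul_nonneg hζ (div_nonneg hta hba))]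
  exact mul_le_of_le_one_right hζ hratio

theorem weighted_projection_L2_bound_general {H : Type*} [NormedAddCommGroup H]
    [InnerProductSpace ℝ H]
    (q : ℕ) (a b : ℝ)
    (τ ζq lam θ : ℝ) (hτ : τ = b - a)
    (hζ : ζq = 1 / (4 * (2 * (q : ℝ) + 1))) (hlam : lam = ζq / τ)
    (φ : ℝ → ℝ) (hφ : ∀ t : ℝ, φ t = θ - lam * (t - a))
    (w g : ℝ → H) (hw : IsPolyDeg (q - 1) w)
    (hg : IsL2ProjOn a b (q - 1) (fun t => φ t • w t) g) :
    Real.sqrt (∫ t in Set.Ioo a b, ‖φ t • w t - g t‖ ^ 2) ≤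
      ζq * Real.sqrt (∫ t in Set.Ioo a b, ‖w t‖ ^ 2) := by
  have hζ0 : 0 ≤ ζq := by rw [hζ]; positivity
  have hφc : Continuous φ := by rw [funext hφ]; fun_prop
  have hwc := hw.continuous
  have hbest := hg.integral_norm_sq_sub_le (hφc.smul hwc) (hw.const_smul θ)
  have hweight : ∀ t ∈ Set.Ioo a b, ‖φ t • w t - θ • w t‖ ≤ ζq * ‖w t‖ := fun t ht => by
    rw [← sub_smul, hφ, sub_sub_cancel_left, norm_smul, Real.norm_eq_abs, abs_neg, hlam, hτ]
    exact mul_le_mul_of_nonneg_right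
      (abs_div_mul_sub_le_of_mem_Icc hζ0 (Set.Ioo_subset_Icc_self ht)) (norm_nonneg _)
  have hcompare := integral_norm_sq_le_of_ae_norm_le
    ((by fun_prop : Continuous fun t => ‖w t‖ ^ 2).integrableOn_Ioo a b)
    (ae_restrict_of_forall_mem measurableSet_Ioo hweight)
  calc Real.sqrt (∫ t in Set.Ioo a b, ‖φ t • w t - g t‖ ^ 2)
      ≤ Real.sqrt (ζq ^ 2 * ∫ t in Set.Ioo a b, ‖w t‖ ^ 2) :=
        Real.sqrt_le_sqrt (hbest.trans hcompare)
    _ = ζq * Real.sqrt (∫ t in Set.Ioo a b, ‖w t‖ ^ 2) := by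
        rw [Real.sqrt_mul (sq_nonneg _), Real.sqrt_sq hζ0]

/-- `L²` bound for the projection error of `φ·w`, where `φ(t) = θ − λ(t − a)` with
`λ = ζ_q/τ`, `ζ_q = 1/(4(2q+1))`, `τ = b − a`, and `w` an `H`-valued polynomial of degree
at most `q − 1`. -/
theorem weighted_projection_L2_bound {H : Type*} [NormedAddCommGroup H]
    [InnerProductSpace ℝ H]
    (q : ℕ) (hq : 1 ≤ q) (a b : ℝ) (hab : a < b)
    (τ ζq lam θ : ℝ) (hτ : τ = b - a)
    (hζ : ζq = 1 / (4 * (2 * (q : ℝ) + 1))) (hlam : lam = ζq / τ)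
    (φ : ℝ → ℝ) (hφ : ∀ t : ℝ, φ t = θ - lam * (t - a))
    (w g : ℝ → H) (hw : IsPolyDeg (q - 1) w)
    (hg : IsL2ProjOn a b (q - 1) (fun t => φ t • w t) g) :
    Real.sqrt (∫ t in Set.Ioo a b, ‖φ t • w t - g t‖ ^ 2) ≤
      ζq * Real.sqrt (∫ t in Set.Ioo a b, ‖w t‖ ^ 2) :=
  weighted_projection_L2_bound_general q a b τ ζq lam θ hτ hζ hlam φ hφ w g hw hg
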